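/- arXiv:1709.06665 — 2 statements merged into one kernel-verified Lean document; each statement's English description precedes it below -/
import Mathlib

section
/- Let u: R^n → R be a convex differentiable function satisfying α|x| ≤ u(x) ≤ α|x| + κ for all x ∈ R^n, where α > 0, κ > 0. Then |Du(x)| ≤ α for all x ∈ R^n. -/
/-!
Convexity puts the graph above its tangent planes: `Du(x) v ≤ u(x + v) - u(x)`. With the cone bounds
this gives `Du(x) v ≤ α|x + v| + κ - α|x| ≤ α|v| + κ`, and a linear functional bounded above by an
affine function of `|v|` has norm at most the slope `α`, since scaling `v` makes `κ` negligible.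
-/

open Set

variable {E : Type*} [NormedAddCommGroup E] [NormedSpace ℝ E]

theorem ConvexOn.apply_sub_le_of_hasFDerivAt {s : Set E} {u : E → ℝ} {u' : E →L[ℝ] ℝ} {x y : E}
    (hu : ConvexOn ℝ s u) (hx : x ∈ s) (hy : y ∈ s) (hu' : HasFDerivAt u u' x) :
    u' (y - x) ≤ u y - u x := by
  set g : ℝ → ℝ := u ∘ AffineMap.lineMap x y
  have hg : ConvexOn ℝ (Icc 0 1) g :=
    (hu.comp_affineMap _).subset (fun t ht => hu.1.lineMap_mem hx hy ht) (convex_Icc 0 1)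
  have hg' : HasDerivAt g (u' (y - x)) 0 := by
    rw [← AffineMap.lineMap_apply_zero (k := ℝ) x y] at hu'
    exact hu'.comp_hasDerivAt 0 AffineMap.hasDerivAt_lineMap
  have := hg.le_slope_of_hasDerivAt (left_mem_Icc.2 zero_le_one) (right_mem_Icc.2 zero_le_one)
    zero_lt_one hg'
  simpa [g, slope_def_field] using this

theorem ContinuousLinearMap.apply_le_mul_norm_of_le_mul_norm_add {ℓ : E →L[ℝ] ℝ} {α κ : ℝ}
    (h : ∀ v, ℓ v ≤ α * ‖v‖ + κ) (v : E) : ℓ v ≤ α * ‖v‖ := by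
  by_contra! hlt
  set d := ℓ v - α * ‖v‖
  have hd : 0 < d := sub_pos.2 hlt
  set t := (|κ| + 1) / d
  have ht : 0 < t := by positivity
  have hscaled : t * ℓ v ≤ t * (α * ‖v‖) + κ := by
    simpa [norm_smul, abs_of_pos ht, mul_left_comm] using h (t • v)
  have htd : t * d = |κ| + 1 := div_mul_cancel₀ _ hd.ne'
  nlinarith [le_abs_self κ]

theorem ContinuousLinearMap.opNorm_le_of_apply_le {ℓ : E →L[ℝ] ℝ} {α : ℝ} (hα : 0 ≤ α)
    (h : ∀ v, ℓ v ≤ α * ‖v‖) : ‖ℓ‖ ≤ α := by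
  refine ℓ.opNorm_le_bound hα fun v => abs_le.2 ⟨?_, h v⟩
  simpa [neg_le] using h (-v)

theorem stmt_5_general (n : ℕ) (u : EuclideanSpace ℝ (Fin n) → ℝ)
    (hconv : ConvexOn ℝ Set.univ u) (hdiff : Differentiable ℝ u)
    (α κ : ℝ) (hα : 0 < α)
    (hbound : ∀ x, α * ‖x‖ ≤ u x ∧ u x ≤ α * ‖x‖ + κ) :
    ∀ x, ‖fderiv ℝ u x‖ ≤ α := by
  intro x
  have haffine : ∀ v, fderiv ℝ u x v ≤ α * ‖v‖ + κ := fun v => calc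
    fderiv ℝ u x v = fderiv ℝ u x (x + v - x) := by rw [add_sub_cancel_left]
    _ ≤ u (x + v) - u x :=
      hconv.apply_sub_le_of_hasFDerivAt (mem_univ _) (mem_univ _) (hdiff x).hasFDerivAt
    _ ≤ α * ‖x + v‖ + κ - α * ‖x‖ := by linarith [(hbound (x + v)).2, (hbound x).1]
    _ ≤ α * ‖v‖ + κ := by nlinarith [norm_add_le x v]
  exact ContinuousLinearMap.opNorm_le_of_apply_le hα.le
    (ContinuousLinearMap.apply_le_mul_norm_of_le_mul_norm_add haffine)

/-- A convex differentiable function `u : ℝⁿ → ℝ` satisfying `α|x| ≤ u(x) ≤ α|x| + κ`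
with `α > 0`, `κ > 0` has gradient bounded by `α`: `|Du(x)| ≤ α` for all `x`. -/
theorem stmt_5 (n : ℕ) (u : EuclideanSpace ℝ (Fin n) → ℝ)
    (hconv : ConvexOn ℝ Set.univ u) (hdiff : Differentiable ℝ u)
    (α κ : ℝ) (hα : 0 < α) (hκ : 0 < κ)
    (hbound : ∀ x, α * ‖x‖ ≤ u x ∧ u x ≤ α * ‖x‖ + κ) :
    ∀ x, ‖fderiv ℝ u x‖ ≤ α :=
  stmt_5_general n u hconv hdiff α κ hα hbound
end

section
/- Let n ≥ 2, α₀ > 0. Suppose u: R^n → R is a convex differentiable function with α|x| ≤ u(x) ≤ α|x| + κ for some 0 < α ≤ α₀ and κ > 0. Let F(x) = (x, u(x)) ∈ R^{n+1}, ω = e_{n+1}, ν(x) = (Du(x), −1)/√(1+|Du(x)|²). Then the quantity ⟨F̂, ν⟩ := −⟨F,ω⟩⟨ω,ν⟩ = u(x)/√(1+|Du(x)|²) satisfies ⟨F̂, ν⟩ ≥ (α/(1+α²)) |F(x)| for all x ∈ R^n; consequently ⟨F̂, ν⟩ ≥ λ(n,α₀) √γ |F| where γ = (n−1)α²/(1+α²)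 and λ(n,α₀) = 1/(√(n−1)·√(1+α₀²)). -/
/-!
Convexity puts the graph above its tangent planes, and the graph stays below the cone
`α|x| + κ`; letting the point of comparison run to infinity along a ray bounds every
directional derivative by `α`, so `|Du| ≤ α`. Hence `1/√(1+|Du|²) ≥ 1/√(1+α²)`, while
`u ≥ α|x|` gives `u ≥ (α/√(1+α²))|F|`; multiplying yields the first bound. The second
follows because `λ(n,α₀)√γ ≤ α/(√(1+α²)√(1+α₀²)) ≤ α/(1+α²)`.
-/

open Filter Topology

theorem ConvexOn.hasFDerivAt_apply_sub_le {E : Type*} [NormedAddCommGroup E] [NormedSpace ℝ E]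
    {u : E → ℝ} {f' : E →L[ℝ] ℝ} {x : E} (hconv : ConvexOn ℝ Set.univ u)
    (hf : HasFDerivAt u f' x) (y : E) : f' (y - x) ≤ u y - u x := by
  have hline : ConvexOn ℝ Set.univ (u ∘ (AffineMap.lineMap x y : ℝ →ᵃ[ℝ] E)) := by
    simpa using hconv.comp_affineMap (AffineMap.lineMap x y)
  have hderiv : HasDerivAt (u ∘ (AffineMap.lineMap x y : ℝ →ᵃ[ℝ] E)) (f' (y - x)) 0 := by
    have hf0 : HasFDerivAt u f' (AffineMap.lineMap x y (0 : ℝ)) := by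
      rwa [AffineMap.lineMap_apply_zero]
    exact hf0.comp_hasDerivAt (0 : ℝ) AffineMap.hasDerivAt_lineMap
  simpa [slope_def_field] using
    hline.le_slope_of_hasDerivAt (Set.mem_univ 0) (Set.mem_univ 1) one_pos hderiv

theorem ConvexOn.hasFDerivAt_apply_le_of_le_norm_add {E : Type*} [NormedAddCommGroup E]
    [NormedSpace ℝ E] {u : E → ℝ} {f' : E →L[ℝ] ℝ} {x : E} {α κ : ℝ}
    (hconv : ConvexOn ℝ Set.univ u) (hf : HasFDerivAt u f' x)
    (hle : ∀ y, u y ≤ α * ‖y‖ + κ) (hα : 0 ≤ α) (v : E) : f' v ≤ α * ‖v‖ := by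
  set C := α * ‖x‖ + κ - u x
  have hslope : ∀ t : ℝ, 0 < t → f' v ≤ α * ‖v‖ + C / t := by
    intro t ht
    have htangent := hconv.hasFDerivAt_apply_sub_le hf (x + t • v)
    have hnorm : ‖x + t • v‖ ≤ ‖x‖ + t * ‖v‖ := by
      simpa [norm_smul, abs_of_pos ht] using norm_add_le x (t • v)
    rw [add_sub_cancel_left, map_smul, smul_eq_mul] at htangent
    rw [add_div' _ _ _ ht.ne', le_div_iff₀ ht]
    nlinarith [hle (x + t • v)]
  have hlim : Tendsto (fun t : ℝ => α * ‖v‖ + C / t) atTop (𝓝 (α * ‖v‖ + 0)) :=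
    tendsto_const_nhds.add (tendsto_const_nhds.div_atTop tendsto_id)
  rw [add_zero] at hlim
  exact ge_of_tendsto hlim (eventually_gt_atTop 0 |>.mono hslope)

theorem ConvexOn.norm_fderiv_le_of_le_norm_add {E : Type*} [NormedAddCommGroup E]
    [NormedSpace ℝ E] {u : E → ℝ} {x : E} {α κ : ℝ}
    (hconv : ConvexOn ℝ Set.univ u) (hdiff : DifferentiableAt ℝ u x)
    (hle : ∀ y, u y ≤ α * ‖y‖ + κ) (hα : 0 ≤ α) : ‖fderiv ℝ u x‖ ≤ α := by
  have hdir := hconv.hasFDerivAt_apply_le_of_le_norm_add hdiff.hasFDerivAt hle hα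
  refine ContinuousLinearMap.opNorm_le_bound _ hα fun v => abs_le.2 ⟨?_, hdir v⟩
  simpa [neg_le] using hdir (-v)

theorem mul_sqrt_sq_add_sq_le {a r s : ℝ} (ha : 0 ≤ a) (hr : 0 ≤ r) (hars : a * r ≤ s) :
    a * √(r ^ 2 + s ^ 2) ≤ √(1 + a ^ 2) * s := by
  have hs : 0 ≤ s := (mul_nonneg ha hr).trans hars
  calc a * √(r ^ 2 + s ^ 2) = √(a ^ 2 * (r ^ 2 + s ^ 2)) := by
        rw [Real.sqrt_mul (sq_nonneg a), Real.sqrt_sq ha]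
    _ ≤ √((1 + a ^ 2) * s ^ 2) := Real.sqrt_le_sqrt (by nlinarith [mul_nonneg ha hr])
    _ = √(1 + a ^ 2) * s := by rw [Real.sqrt_mul (by positivity), Real.sqrt_sq hs]

theorem div_one_add_sq_mul_sqrt_le {a r s D : ℝ} (ha : 0 ≤ a) (hr : 0 ≤ r) (hars : a * r ≤ s)
    (hD : |D| ≤ a) :
    a / (1 + a ^ 2) * √(r ^ 2 + s ^ 2) ≤ s / √(1 + D ^ 2) := by
  have hs : 0 ≤ s := (mul_nonneg ha hr).trans hars
  have hA : 0 < √(1 + a ^ 2) := Real.sqrt_pos.2 (by positivity)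
  calc a / (1 + a ^ 2) * √(r ^ 2 + s ^ 2)
      = a * √(r ^ 2 + s ^ 2) / √(1 + a ^ 2) / √(1 + a ^ 2) := by
        rw [div_div, Real.mul_self_sqrt (by positivity)]; ring
    _ ≤ √(1 + a ^ 2) * s / √(1 + a ^ 2) / √(1 + a ^ 2) := by
        gcongr ?_ / _ / _
        exact mul_sqrt_sq_add_sq_le ha hr hars
    _ = s / √(1 + a ^ 2) := by rw [mul_div_cancel_left₀ _ hA.ne']
    _ ≤ s / √(1 + D ^ 2) := by
        have hD2 : D ^ 2 ≤ a ^ 2 := sq_le_sq' (abs_le.1 hD).1 (abs_le.1 hD).2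
        gcongr

theorem one_div_sqrt_mul_sqrt_mul_sqrt_le (m : ℝ) {a a₀ : ℝ} (ha : 0 ≤ a) (haa₀ : a ≤ a₀) :
    1 / (√m * √(1 + a₀ ^ 2)) * √(m * a ^ 2 / (1 + a ^ 2)) ≤ a / (1 + a ^ 2) := by
  have hA : 0 < √(1 + a ^ 2) := Real.sqrt_pos.2 (by positivity)
  have hA₀ : √(1 + a ^ 2) ≤ √(1 + a₀ ^ 2) := Real.sqrt_le_sqrt (by nlinarith)
  calc 1 / (√m * √(1 + a₀ ^ 2)) * √(m * a ^ 2 / (1 + a ^ 2))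
      = √m / √m * (a / (√(1 + a ^ 2) * √(1 + a₀ ^ 2))) := by
        rw [Real.sqrt_div' _ (by positivity), Real.sqrt_mul' _ (sq_nonneg a), Real.sqrt_sq ha]
        ring
    _ ≤ 1 * (a / (√(1 + a ^ 2) * √(1 + a ^ 2))) := by
        gcongr
        exact div_self_le_one _
    _ = a / (1 + a ^ 2) := by rw [one_mul, Real.mul_self_sqrt (by positivity)]

theorem stmt_6_general (n : ℕ) (α₀ : ℝ)
    (u : EuclideanSpace ℝ (Fin n) → ℝ)
    (hconv : ConvexOn ℝ Set.univ u) (hdiff : Differentiable ℝ u)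
    (α κ : ℝ) (hα : 0 < α) (hαα₀ : α ≤ α₀)
    (hbound : ∀ x, α * ‖x‖ ≤ u x ∧ u x ≤ α * ‖x‖ + κ) :
    ∀ x,
      α / (1 + α ^ 2) * Real.sqrt (‖x‖ ^ 2 + u x ^ 2) ≤
          u x / Real.sqrt (1 + ‖fderiv ℝ u x‖ ^ 2) ∧
      1 / (Real.sqrt (n - 1) * Real.sqrt (1 + α₀ ^ 2)) *
            Real.sqrt ((n - 1) * α ^ 2 / (1 + α ^ 2)) *
            Real.sqrt (‖x‖ ^ 2 + u x ^ 2) ≤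
          u x / Real.sqrt (1 + ‖fderiv ℝ u x‖ ^ 2) := by
  intro x
  have hgrad : |‖fderiv ℝ u x‖| ≤ α := by
    rw [abs_norm]
    exact hconv.norm_fderiv_le_of_le_norm_add (hdiff x) (fun y => (hbound y).2) hα.le
  have hfirst := div_one_add_sq_mul_sqrt_le hα.le (norm_nonneg x) (hbound x).1 hgrad
  refine ⟨hfirst, le_trans ?_ hfirst⟩
  gcongr
  exact one_div_sqrt_mul_sqrt_mul_sqrt_le _ hα.le hαα₀

/-- For an entire convex graph `x_{n+1} = u(x)` pinched between the cones `α|x|` and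
`α|x| + κ` with `0 < α ≤ α₀`, the quantity
`⟨F̂,ν⟩ = −⟨F,ω⟩⟨ω,ν⟩ = u(x)/√(1+|Du(x)|²)` satisfies
`⟨F̂,ν⟩ ≥ (α/(1+α²))|F(x)|`, and consequently `⟨F̂,ν⟩ ≥ λ(n,α₀)√γ |F|` with
`γ = (n−1)α²/(1+α²)` and `λ(n,α₀) = 1/(√(n−1)√(1+α₀²))`, where `|F(x)|² = |x|² + u(x)²`. -/
theorem stmt_6 (n : ℕ) (hn : 2 ≤ n) (α₀ : ℝ) (hα₀ : 0 < α₀)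
    (u : EuclideanSpace ℝ (Fin n) → ℝ)
    (hconv : ConvexOn ℝ Set.univ u) (hdiff : Differentiable ℝ u)
    (α κ : ℝ) (hα : 0 < α) (hαα₀ : α ≤ α₀) (hκ : 0 < κ)
    (hbound : ∀ x, α * ‖x‖ ≤ u x ∧ u x ≤ α * ‖x‖ + κ) :
    ∀ x,
      α / (1 + α ^ 2) * Real.sqrt (‖x‖ ^ 2 + u x ^ 2) ≤
          u x / Real.sqrt (1 + ‖fderiv ℝ u x‖ ^ 2) ∧
      1 / (Real.sqrt (n - 1) * Real.sqrt (1 + α₀ ^ 2)) *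
            Real.sqrt ((n - 1) * α ^ 2 / (1 + α ^ 2)) *
            Real.sqrt (‖x‖ ^ 2 + u x ^ 2) ≤
          u x / Real.sqrt (1 + ‖fderiv ℝ u x‖ ^ 2) :=
  stmt_6_general n α₀ u hconv hdiff α κ hα hαα₀ hbound
end
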